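/- Let c > 0 be real and let (K_L) be a sequence of integers with K_L ≥ 2 and K_L/L → c as L → ∞. Then the equilibrium proposer payoff Π_P(K_L, L) = (1 − s*(K_L,L))·(1 − (1 − 1/K_L)^L) converges to 1 − (c + 1)/(c·e^{1/c}), and the equilibrium responder payoff Π_R(K_L, L) = s*(K_L,L)·(K_L/L)·(1 − (1 − 1/K_L)^L) converges to e^{−1/c}, as L → ∞. -/

import Mathlib

/-- The subgame-perfect Nash equilibrium offer of the Multi-Proposer-Multi-Responder
Ultimatum Game with `K` proposers and `L` responders. -/
noncomputable def sstar (K L : ℕ) : ℝ :=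
  ((L:ℝ) * ((K:ℝ) - 1)^L) /
    ((K:ℝ)^(L+1) - ((K:ℝ) - 1)^(L-1) * (((K:ℝ) - 1) * (K:ℝ) + (L:ℝ)))

/-- Equilibrium expected payoff of a proposer. -/
noncomputable def PiP (K L : ℕ) : ℝ :=
  (1 - sstar K L) * (1 - (1 - 1/(K:ℝ))^L)

/-- Equilibrium expected payoff of a responder. -/
noncomputable def PiR (K L : ℕ) : ℝ :=
  sstar K L * ((K:ℝ) / (L:ℝ)) * (1 - (1 - 1/(K:ℝ))^L)

/-!
Write `r = (1 - 1/K)^L` and `t = L / (K (K - 1))`. Clearing denominators in the formula for `s*`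
gives `s* · K / L = r / (1 - r - r t)`. Along `K_L / L → c > 0` we have `K_L → ∞`, hence
`K_L log (1 - 1/K_L) → -1`, so `r → e := exp (-1/c)` and `t → 0`. Thus `s* · K / L → e / (1 - e)`
and `s* → e / ((1 - e) c)`, and both payoffs are continuous in these quantities and `r`.
-/

open Filter Topology Real

theorem sstar_mul_div_eq {K L : ℕ} (hK : 2 ≤ K) (hL : L ≠ 0) :
    sstar K L * (K / L) =
      (1 - 1 / (K : ℝ)) ^ L /
        (1 - (1 - 1 / (K : ℝ)) ^ L - (1 - 1 / (K : ℝ)) ^ L * (L / (K * (K - 1)))) := by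
  obtain ⟨m, rfl⟩ := Nat.exists_eq_add_one_of_ne_zero hL
  have hK1 : (1 : ℝ) < K := by exact_mod_cast hK
  have hK0 : (K : ℝ) ≠ 0 := by positivity
  have hK1' : (K : ℝ) - 1 ≠ 0 := by linarith
  unfold sstar
  rw [Nat.add_sub_cancel, one_sub_div hK0, div_pow]
  field_simp
  rw [show (K * (K - 1) * (K ^ (m + 1) - (K - 1) ^ (m + 1)) - (m + 1 : ℕ) * (K - 1) ^ (m + 1) : ℝ)
      = (K - 1) * (K ^ (m + 1 + 1) - (K - 1) ^ m * (K * (K - 1) + (m + 1 : ℕ))) by ring,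
    div_mul_cancel_left₀ hK1', one_div]

theorem tendsto_one_add_div_pow_of_tendsto_div {α : Type*} {l : Filter α} {f : α → ℝ}
    {g : α → ℕ} {t d : ℝ} (hf : Tendsto f l atTop)
    (hgf : Tendsto (fun a => (g a : ℝ) / f a) l (𝓝 d)) :
    Tendsto (fun a => (1 + t / f a) ^ g a) l (𝓝 (exp (d * t))) := by
  have hlog : Tendsto (fun a => f a * log (1 + t / f a)) l (𝓝 t) :=
    (tendsto_mul_log_one_add_div_atTop t).comp hf
  have hpos : ∀ᶠ a in l, 0 < 1 + t / f a := by
    have : Tendsto (fun a => 1 + t / f a) l (𝓝 (1 + 0)) :=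
      tendsto_const_nhds.add (tendsto_const_nhds.div_atTop hf)
    exact this.eventually_const_lt (by norm_num)
  refine ((continuous_exp.tendsto _).comp (hgf.mul hlog)).congr' ?_
  filter_upwards [hpos, hf.eventually_ne_atTop 0] with a ha hfa
  rw [Function.comp_apply, ← mul_assoc, div_mul_cancel₀ _ hfa, exp_nat_mul, exp_log ha]

theorem one_sub_exp_neg_ne_zero {x : ℝ} (hx : 0 < x) : 1 - exp (-x) ≠ 0 :=
  (sub_pos.mpr (exp_lt_one_iff.mpr (neg_neg_of_pos hx))).ne'

section
variable {f : ℕ → ℝ} {c : ℝ}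

theorem tendsto_atTop_of_tendsto_div_natCast (hc : 0 < c)
    (hf : Tendsto (fun n : ℕ => f n / n) atTop (𝓝 c)) : Tendsto f atTop atTop := by
  refine (hf.pos_mul_atTop hc tendsto_natCast_atTop_atTop).congr' ?_
  filter_upwards [eventually_ne_atTop 0] with n hn
  exact div_mul_cancel₀ _ (Nat.cast_ne_zero.mpr hn)

theorem tendsto_natCast_div_of_tendsto_div_natCast (hc : c ≠ 0)
    (hf : Tendsto (fun n : ℕ => f n / n) atTop (𝓝 c)) :
    Tendsto (fun n : ℕ => (n : ℝ) / f n) atTop (𝓝 c⁻¹) := by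
  simpa only [inv_div] using hf.inv₀ hc

theorem tendsto_one_sub_inv_pow_of_tendsto_div_natCast (hc : 0 < c)
    (hf : Tendsto (fun n : ℕ => f n / n) atTop (𝓝 c)) :
    Tendsto (fun n : ℕ => (1 - 1 / f n) ^ n) atTop (𝓝 (exp (-c⁻¹))) := by
  have h := tendsto_one_add_div_pow_of_tendsto_div (g := id) (t := -1)
    (tendsto_atTop_of_tendsto_div_natCast hc hf)
    (tendsto_natCast_div_of_tendsto_div_natCast hc.ne' hf)
  simpa only [id, mul_neg_one, neg_div, ← sub_eq_add_neg] using h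

theorem tendsto_natCast_div_mul_sub_one_of_tendsto_div_natCast (hc : 0 < c)
    (hf : Tendsto (fun n : ℕ => f n / n) atTop (𝓝 c)) :
    Tendsto (fun n : ℕ => (n : ℝ) / (f n * (f n - 1))) atTop (𝓝 0) := by
  have hf1 : Tendsto (fun n => f n - 1) atTop atTop :=
    tendsto_atTop_add_const_right _ (-1) (tendsto_atTop_of_tendsto_div_natCast hc hf)
  have h := (tendsto_natCast_div_of_tendsto_div_natCast hc.ne' hf).mul hf1.inv_tendsto_atTop
  rw [mul_zero] at h
  exact h.congr fun n => by rw [Pi.inv_apply, ← div_eq_mul_inv, div_div]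

end

section
variable {c : ℝ} {K : ℕ → ℕ}

theorem tendsto_sstar_mul_div (hc : 0 < c) (hK : ∀ L, 2 ≤ K L)
    (hlim : Tendsto (fun L : ℕ => (K L : ℝ) / L) atTop (𝓝 c)) :
    Tendsto (fun L => sstar (K L) L * (K L / L)) atTop
      (𝓝 (exp (-c⁻¹) / (1 - exp (-c⁻¹)))) := by
  have hr := tendsto_one_sub_inv_pow_of_tendsto_div_natCast hc hlim
  have hden := ((tendsto_const_nhds (x := 1)).sub hr).sub
    (hr.mul (tendsto_natCast_div_mul_sub_one_of_tendsto_div_natCast hc hlim))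
  rw [mul_zero, sub_zero] at hden
  have he := one_sub_exp_neg_ne_zero (inv_pos.mpr hc)
  refine (hr.div hden he).congr' ?_
  filter_upwards [eventually_ne_atTop 0] with L hL
  exact (sstar_mul_div_eq (hK L) hL).symm

theorem tendsto_sstar (hc : 0 < c) (hK : ∀ L, 2 ≤ K L)
    (hlim : Tendsto (fun L : ℕ => (K L : ℝ) / L) atTop (𝓝 c)) :
    Tendsto (fun L => sstar (K L) L) atTop
      (𝓝 (exp (-c⁻¹) / (1 - exp (-c⁻¹)) * c⁻¹)) := by
  refine ((tendsto_sstar_mul_div hc hK hlim).mul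
    (tendsto_natCast_div_of_tendsto_div_natCast hc.ne' hlim)).congr' ?_
  filter_upwards [eventually_ne_atTop 0] with L hL
  have hKL : (K L : ℝ) ≠ 0 := by have := hK L; positivity
  have hL' : (L : ℝ) ≠ 0 := by positivity
  field_simp

end

theorem stmt18 (c : ℝ) (hc : 0 < c) (K : ℕ → ℕ) (hK : ∀ L, 2 ≤ K L)
    (hlim : Filter.Tendsto (fun L : ℕ => (K L : ℝ) / (L:ℝ)) Filter.atTop (nhds c)) :
    Filter.Tendsto (fun L : ℕ => PiP (K L) L) Filter.atTop
      (nhds (1 - (c + 1) / (c * Real.exp (1/c)))) ∧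
    Filter.Tendsto (fun L : ℕ => PiR (K L) L) Filter.atTop
      (nhds (Real.exp (-(1/c)))) := by
  have hr := tendsto_one_sub_inv_pow_of_tendsto_div_natCast hc hlim
  have he := one_sub_exp_neg_ne_zero (inv_pos.mpr hc)
  constructor
  · have hval : (1 - exp (-c⁻¹) / (1 - exp (-c⁻¹)) * c⁻¹) * (1 - exp (-c⁻¹)) =
        1 - (c + 1) / (c * exp (1 / c)) := by
      have he0 := exp_pos (-c⁻¹)
      rw [one_div, ← inv_inv (exp c⁻¹), ← exp_neg]
      generalize exp (-c⁻¹) = e at he he0 ⊢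
      field_simp
      ring
    rw [← hval]
    exact ((tendsto_const_nhds (x := 1)).sub (tendsto_sstar hc hK hlim)).mul
      ((tendsto_const_nhds (x := 1)).sub hr)
  · rw [one_div, ← div_mul_cancel₀ (exp (-c⁻¹)) he]
    exact (tendsto_sstar_mul_div hc hK hlim).mul ((tendsto_const_nhds (x := 1)).sub hr)
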